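/- arXiv:2506.08030 — 3 statements merged into one kernel-verified Lean document; each statement's English description precedes it below -/
import Mathlib

section
/- Let n, m be positive integers, M ∈ ℝ^{n×m} with columns M_1, …, M_m, y ∈ ℝ^n, and γ > 0. For every binary vector z ∈ {0,1}^m, the matrix I_n + γ Σ_{i=1}^m z_i M_i M_iᵀ is invertible and the minimum of (1/2)‖y − Σ_{i=1}^m w_i M_i‖₂² + (1/(2γ))‖w‖₂² over all w ∈ ℝ^m satisfying w_i (1 − z_i) = 0 for all i equals (1/2) yᵀ (I_n + γ Σ_{i=1}^m z_i M_i M_iᵀ)⁻¹ y. (Proposition 1.) -/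
open scoped Matrix

private lemma swap_sum {n m : ℕ} (a : Fin n → ℝ) (c : Fin m → ℝ) (g : Fin m → Fin n → ℝ) :
    ∑ j, a j * ∑ i, c i * g i j = ∑ i, c i * ∑ j, g i j * a j := by
  calc ∑ j, a j * ∑ i, c i * g i j = ∑ j, ∑ i, a j * (c i * g i j) := by
        exact Finset.sum_congr rfl fun j _ => Finset.mul_sum _ _ _
    _ = ∑ i, ∑ j, a j * (c i * g i j) := Finset.sum_comm
    _ = ∑ i, c i * ∑ j, g i j * a j := by
        refine Finset.sum_congr rfl fun i _ => ?_
        rw [Finset.mul_sum]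
        exact Finset.sum_congr rfl fun j _ => by ring

/-- **Proposition 1.** For a binary vector `z ∈ {0,1}^m`, the matrix
`I_n + γ ∑ i, z i • M_i M_iᵀ` is invertible, and the minimum of the ridge-regularized
least-squares objective over `w` supported on the selected coordinates equals
`(1/2) yᵀ (I_n + γ ∑ i, z i • M_i M_iᵀ)⁻¹ y`. -/
theorem stmt0 (n m : ℕ) (hn : 0 < n) (hm : 0 < m)
    (M : Matrix (Fin n) (Fin m) ℝ) (y : Fin n → ℝ) (γ : ℝ) (hγ : 0 < γ)
    (z : Fin m → ℝ) (hz : ∀ i, z i = 0 ∨ z i = 1) :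
    IsUnit ((1 : Matrix (Fin n) (Fin n) ℝ)
        + γ • ∑ i, z i • Matrix.vecMulVec (fun j => M j i) (fun j => M j i)) ∧
    IsLeast
      { v : ℝ | ∃ w : Fin m → ℝ, (∀ i, w i * (1 - z i) = 0) ∧
          v = (1/2) * (∑ j, (y j - ∑ i, w i * M j i)^2) + (1/(2*γ)) * (∑ i, (w i)^2) }
      ((1/2) * (y ⬝ᵥ (((1 : Matrix (Fin n) (Fin n) ℝ)
        + γ • ∑ i, z i • Matrix.vecMulVec (fun j => M j i) (fun j => M j i))⁻¹ *ᵥ y))) := by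
  classical
  set u : Fin m → Fin n → ℝ := fun i j => M j i with hu
  set A : Matrix (Fin n) (Fin n) ℝ :=
    (1 : Matrix (Fin n) (Fin n) ℝ)
      + γ • ∑ i, z i • Matrix.vecMulVec (fun j => M j i) (fun j => M j i) with hA
  have hAapp : ∀ j k, A j k = (if j = k then 1 else 0) + γ * ∑ i, z i * (u i j * u i k) := by
    intro j k
    simp [hA, Matrix.add_apply, Matrix.one_apply, Matrix.sum_apply,
      Matrix.vecMulVec_apply, Finset.mul_sum, hu, mul_assoc]
  have hzsq : ∀ i, z i * z i = z i := by
    intro i; rcases hz i with h | h <;> rw [h] <;> ring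
  have hznn : ∀ i, 0 ≤ z i := by
    intro i; rcases hz i with h | h <;> rw [h] <;> norm_num
  have hdot : ∀ (a b : Fin n → ℝ), a ⬝ᵥ b = ∑ j, a j * b j := fun a b => rfl
  have hAmul : ∀ (v : Fin n → ℝ) j,
      (A *ᵥ v) j = v j + γ * ∑ i, (z i * (u i ⬝ᵥ v)) * u i j := by
    intro v j
    have h1 : (A *ᵥ v) j = ∑ k, A j k * v k := rfl
    rw [h1]
    simp only [hAapp, add_mul]
    rw [Finset.sum_add_distrib]
    congr 1
    · simp [ite_mul]
    · calc ∑ k, (γ * ∑ i, z i * (u i j * u i k)) * v k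
          = γ * ∑ k, v k * ∑ i, (z i * u i j) * u i k := by
            rw [Finset.mul_sum]
            refine Finset.sum_congr rfl fun k _ => ?_
            simp only [Finset.sum_mul, Finset.mul_sum]
            exact Finset.sum_congr rfl fun i _ => by ring
        _ = γ * ∑ i, (z i * u i j) * ∑ k, u i k * v k := by rw [swap_sum]
        _ = γ * ∑ i, (z i * (u i ⬝ᵥ v)) * u i j := by
            refine congrArg _ (Finset.sum_congr rfl fun i _ => ?_)
            rw [hdot]
            ring
  have hquad : ∀ v : Fin n → ℝ,
      v ⬝ᵥ (A *ᵥ v) = (∑ j, (v j)^2) + γ * ∑ i, z i * (u i ⬝ᵥ v)^2 := by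
    intro v
    rw [hdot]
    calc ∑ j, v j * (A *ᵥ v) j
        = ∑ j, (v j * v j + γ * (v j * ∑ i, (z i * (u i ⬝ᵥ v)) * u i j)) := by
          refine Finset.sum_congr rfl fun j _ => ?_
          rw [hAmul v j]
          ring
      _ = (∑ j, (v j)^2) + γ * ∑ j, v j * ∑ i, (z i * (u i ⬝ᵥ v)) * u i j := by
          rw [Finset.sum_add_distrib, ← Finset.mul_sum]
          congr 1
          exact Finset.sum_congr rfl fun j _ => by ring
      _ = (∑ j, (v j)^2) + γ * ∑ i, z i * (u i ⬝ᵥ v)^2 := by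
          rw [swap_sum]
          congr 1
          refine congrArg _ (Finset.sum_congr rfl fun i _ => ?_)
          rw [← hdot]
          ring
  have hPD : A.PosDef := by
    rw [Matrix.posDef_iff_dotProduct_mulVec]
    constructor
    · ext j k
      simp only [Matrix.conjTranspose_apply, star_trivial]
      rw [hAapp, hAapp]
      congr 1
      · simp [eq_comm]
      · exact congrArg _ (Finset.sum_congr rfl fun i _ => by ring)
    · intro x hx
      simp only [star_trivial, RCLike.re_to_real]
      rw [hquad x]
      have h1 : 0 < ∑ j, (x j)^2 := by
        have hxj : ∃ j, x j ≠ 0 := by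
          by_contra h
          push_neg at h
          exact hx (funext h)
        obtain ⟨j, hj⟩ := hxj
        refine Finset.sum_pos' (fun k _ => sq_nonneg _) ⟨j, Finset.mem_univ j, ?_⟩
        positivity
      have h2 : 0 ≤ γ * ∑ i, z i * (u i ⬝ᵥ x)^2 := by
        refine mul_nonneg hγ.le (Finset.sum_nonneg fun i _ => ?_)
        exact mul_nonneg (hznn i) (sq_nonneg _)
      linarith
  have hUnit : IsUnit A := hPD.isUnit
  refine ⟨hUnit, ?_⟩
  have hAinv : A * A⁻¹ = 1 :=
    Matrix.mul_nonsing_inv A ((Matrix.isUnit_iff_isUnit_det A).mp hUnit)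
  set r : Fin n → ℝ := A⁻¹ *ᵥ y with hr
  have hAr : A *ᵥ r = y := by
    rw [hr, Matrix.mulVec_mulVec, hAinv, Matrix.one_mulVec]
  set t : Fin m → ℝ := fun i => u i ⬝ᵥ r with ht
  have htj : ∀ i, t i = ∑ j, u i j * r j := fun i => rfl
  have hyj : ∀ j, y j = r j + γ * ∑ i, (z i * t i) * u i j := by
    intro j
    rw [← hAr]
    exact (hAmul r j)
  set wst : Fin m → ℝ := fun i => γ * (z i * t i) with hwst
  have hfeas : ∀ i, wst i * (1 - z i) = 0 := by
    intro i; rcases hz i with h | h <;> simp [hwst, h]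
  have hres : ∀ j, y j - ∑ i, wst i * M j i = r j := by
    intro j
    have h1 : ∑ i, wst i * M j i = γ * ∑ i, (z i * t i) * u i j := by
      rw [Finset.mul_sum]
      exact Finset.sum_congr rfl fun i _ => by simp only [hwst, hu]; ring
    rw [h1, hyj j]; ring
  have hwstsq : ∑ i, (wst i)^2 = γ^2 * ∑ i, z i * (t i)^2 := by
    rw [Finset.mul_sum]
    refine Finset.sum_congr rfl fun i _ => ?_
    have h1 : (wst i)^2 = γ^2 * ((z i * z i) * (t i)^2) := by rw [hwst]; ring
    rw [h1, hzsq i]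
  have hyr : y ⬝ᵥ r = (∑ j, (r j)^2) + γ * ∑ i, z i * (t i)^2 := by
    have h1 : r ⬝ᵥ (A *ᵥ r) = (∑ j, (r j)^2) + γ * ∑ i, z i * (u i ⬝ᵥ r)^2 := hquad r
    rw [hAr, dotProduct_comm] at h1
    exact h1
  constructor
  · -- membership
    refine ⟨wst, hfeas, ?_⟩
    have h1 : ∑ j, (y j - ∑ i, wst i * M j i)^2 = ∑ j, (r j)^2 :=
      Finset.sum_congr rfl fun j _ => by rw [hres j]
    rw [h1, hwstsq, hyr]
    field_simp
  · -- lower bound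
    rintro v ⟨w, hw, hv⟩
    set d : Fin m → ℝ := fun i => w i - wst i with hd
    have hdz : ∀ i, d i * t i * (z i - 1) = 0 := by
      intro i
      have h1 : d i * (1 - z i) = 0 := by
        have h2 : d i * (1 - z i) = w i * (1 - z i) - wst i * (1 - z i) := by
          rw [hd]; ring
        rw [h2, hw i, hfeas i]; ring
      have h3 : d i * t i * (z i - 1) = -(t i * (d i * (1 - z i))) := by ring
      rw [h3, h1]; ring
    set s : Fin n → ℝ := fun j => ∑ i, d i * M j i with hs
    have hres2 : ∀ j, y j - ∑ i, w i * M j i = r j - s j := by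
      intro j
      have hsplit : ∑ i, w i * M j i = (∑ i, wst i * M j i) + s j := by
        rw [hs, ← Finset.sum_add_distrib]
        exact Finset.sum_congr rfl fun i _ => by rw [hd]; ring
      have := hres j
      rw [hsplit]; linarith
    have hcross : ∑ j, r j * s j = ∑ i, d i * t i := by
      calc ∑ j, r j * s j = ∑ j, r j * ∑ i, d i * u i j := by
            refine Finset.sum_congr rfl fun j _ => ?_
            rw [hs]
        _ = ∑ i, d i * ∑ j, u i j * r j := swap_sum r d u
        _ = ∑ i, d i * t i := by
            exact Finset.sum_congr rfl fun i _ => by rw [htj i]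
    have E1 : ∑ j, (y j - ∑ i, w i * M j i)^2
        = (∑ j, (r j)^2) - 2 * (∑ i, d i * t i) + ∑ j, (s j)^2 := by
      calc ∑ j, (y j - ∑ i, w i * M j i)^2
          = ∑ j, ((r j)^2 - 2 * (r j * s j) + (s j)^2) := by
            refine Finset.sum_congr rfl fun j _ => ?_
            rw [hres2 j]; ring
        _ = (∑ j, (r j)^2) - 2 * (∑ j, r j * s j) + ∑ j, (s j)^2 := by
            rw [Finset.sum_add_distrib, Finset.sum_sub_distrib, ← Finset.mul_sum]
        _ = (∑ j, (r j)^2) - 2 * (∑ i, d i * t i) + ∑ j, (s j)^2 := by rw [hcross]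
    have hwd : ∑ i, wst i * d i = γ * ∑ i, z i * (t i * d i) := by
      rw [Finset.mul_sum]
      exact Finset.sum_congr rfl fun i _ => by rw [hwst]; ring
    have E2 : ∑ i, (w i)^2
        = γ^2 * (∑ i, z i * (t i)^2) + 2 * γ * (∑ i, z i * (t i * d i)) + ∑ i, (d i)^2 := by
      calc ∑ i, (w i)^2 = ∑ i, ((wst i)^2 + 2 * (wst i * d i) + (d i)^2) := by
            refine Finset.sum_congr rfl fun i _ => ?_
            have h1 : w i = wst i + d i := by rw [hd]; ring
            rw [h1]; ring
        _ = (∑ i, (wst i)^2) + 2 * (∑ i, wst i * d i) + ∑ i, (d i)^2 := by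
            rw [Finset.sum_add_distrib, Finset.sum_add_distrib, ← Finset.mul_sum]
        _ = _ := by rw [hwstsq, hwd]; ring
    have hRP : ∑ i, z i * (t i * d i) = ∑ i, d i * t i := by
      have h1 : ∑ i, (z i * (t i * d i) - d i * t i) = 0 := by
        refine Finset.sum_eq_zero fun i _ => ?_
        have h2 : z i * (t i * d i) - d i * t i = d i * t i * (z i - 1) := by ring
        rw [h2, hdz i]
      rw [Finset.sum_sub_distrib] at h1
      linarith
    have hs2 : 0 ≤ ∑ j, (s j)^2 := Finset.sum_nonneg fun j _ => sq_nonneg _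
    have hd2 : 0 ≤ (1/(2*γ)) * ∑ i, (d i)^2 := by
      refine mul_nonneg (by positivity) (Finset.sum_nonneg fun i _ => sq_nonneg _)
    rw [hv, E1, E2, hRP, hyr]
    have hexp : (1/(2*γ)) * (γ^2 * (∑ i, z i * (t i)^2) + 2 * γ * (∑ i, d i * t i) + ∑ i, (d i)^2)
        = (γ * ∑ i, z i * (t i)^2)/2 + (∑ i, d i * t i) + (1/(2*γ)) * ∑ i, (d i)^2 := by
      field_simp
    rw [hexp]
    linarith [hs2, hd2]
end

section
/- Let n, m be positive integers, M ∈ ℝ^{n×m} with columns M_1, …, M_m, y ∈ ℝ^n, and γ > 0. The function H₂(z) = (1/2) yᵀ (I_n + γ Σ_{i=1}^m z_i M_i M_iᵀ)⁻¹ y is convex on the cube { z ∈ ℝ^m : 0 ≤ z_i ≤ 1 for all i }. (Proposition 2.) -/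
open scoped Matrix

section Aux
open Matrix

lemma aux_psd_vvT {n : ℕ} (v : Fin n → ℝ) : (Matrix.vecMulVec v v).PosSemidef := by
  rw [Matrix.vecMulVec_eq (Fin 1)]
  have := Matrix.posSemidef_conjTranspose_mul_self (Matrix.replicateRow (Fin 1) v)
  simp [Matrix.conjTranspose_replicateRow] at this
  convert this <;> rfl

lemma aux_psd_smul {n : ℕ} {A : Matrix (Fin n) (Fin n) ℝ} (h : A.PosSemidef) {c : ℝ}
    (hc : 0 ≤ c) : (c • A).PosSemidef := by
  refine Matrix.PosSemidef.of_dotProduct_mulVec_nonneg ?_ fun x => ?_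
  · unfold Matrix.IsHermitian
    rw [Matrix.conjTranspose_smul, h.1.eq]
    simp
  · have := h.dotProduct_mulVec_nonneg x
    rw [Matrix.smul_mulVec, dotProduct_smul]
    exact mul_nonneg hc this

lemma aux_psd_sum {n m : ℕ} (P : Fin m → Matrix (Fin n) (Fin n) ℝ)
    (hP : ∀ i, (P i).PosSemidef) : (∑ i, P i).PosSemidef := by
  classical
  refine Finset.sum_induction P _ (fun a b ha hb => ha.add hb) ?_ (fun i _ => hP i)
  exact Matrix.PosSemidef.zero

/-- Key inequality: for positive definite `A`, `2⟨y,x⟩ - ⟨x,Ax⟩ ≤ ⟨y,A⁻¹y⟩`. -/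
lemma aux_key {n : ℕ} {A : Matrix (Fin n) (Fin n) ℝ} (hA : A.PosDef)
    (y x : Fin n → ℝ) :
    2 * (y ⬝ᵥ x) - x ⬝ᵥ (A *ᵥ x) ≤ y ⬝ᵥ (A⁻¹ *ᵥ y) := by
  have hAsymm : Aᵀ = A := by
    have := hA.isHermitian.eq
    simpa [Matrix.conjTranspose_eq_transpose_of_trivial] using this
  have hinv : A * A⁻¹ = 1 := Matrix.mul_nonsing_inv A (Matrix.isUnit_iff_isUnit_det A |>.1 hA.isUnit)
  set u : Fin n → ℝ := A⁻¹ *ᵥ y - x with hu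
  have h0 : 0 ≤ u ⬝ᵥ (A *ᵥ u) := by
    have := hA.posSemidef.dotProduct_mulVec_nonneg u
    simpa using this
  have hAu : A *ᵥ u = y - A *ᵥ x := by
    rw [hu, Matrix.mulVec_sub, Matrix.mulVec_mulVec, hinv, Matrix.one_mulVec]
  have hx : (A⁻¹ *ᵥ y) ⬝ᵥ (A *ᵥ x) = y ⬝ᵥ x := by
    rw [Matrix.dotProduct_mulVec, ← Matrix.mulVec_transpose, hAsymm, Matrix.mulVec_mulVec,
      hinv, Matrix.one_mulVec]
  have hexp : u ⬝ᵥ (A *ᵥ u) = y ⬝ᵥ (A⁻¹ *ᵥ y) - 2 * (y ⬝ᵥ x) + x ⬝ᵥ (A *ᵥ x) := by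
    rw [hAu, hu, sub_dotProduct, dotProduct_sub, dotProduct_sub,
      hx, dotProduct_comm (A⁻¹ *ᵥ y) y, dotProduct_comm x y]
    ring
  linarith

/-- Value as a "max": for positive definite `A`, `⟨y, A⁻¹ y⟩ = 2⟨y,x₀⟩ - ⟨x₀, A x₀⟩`
with `x₀ = A⁻¹ y`. -/
lemma aux_val {n : ℕ} {A : Matrix (Fin n) (Fin n) ℝ} (hA : A.PosDef) (y : Fin n → ℝ) :
    y ⬝ᵥ (A⁻¹ *ᵥ y)
      = 2 * (y ⬝ᵥ (A⁻¹ *ᵥ y)) - (A⁻¹ *ᵥ y) ⬝ᵥ (A *ᵥ (A⁻¹ *ᵥ y)) := by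
  have hinv : A * A⁻¹ = 1 := Matrix.mul_nonsing_inv A (Matrix.isUnit_iff_isUnit_det A |>.1 hA.isUnit)
  rw [Matrix.mulVec_mulVec, hinv, Matrix.one_mulVec, dotProduct_comm (A⁻¹ *ᵥ y) y]
  ring
end Aux

/-- **Proposition 2.** The function
`H₂(z) = (1/2) yᵀ (I_n + γ ∑ i, z i • M_i M_iᵀ)⁻¹ y` is convex on the cube `[0,1]^m`. -/
theorem stmt1 (n m : ℕ) (hn : 0 < n) (hm : 0 < m)
    (M : Matrix (Fin n) (Fin m) ℝ) (y : Fin n → ℝ) (γ : ℝ) (hγ : 0 < γ) :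
    ConvexOn ℝ {z : Fin m → ℝ | ∀ i, z i ∈ Set.Icc (0:ℝ) 1}
      (fun z : Fin m → ℝ => (1/2) * (y ⬝ᵥ (((1 : Matrix (Fin n) (Fin n) ℝ)
        + γ • ∑ i, z i • Matrix.vecMulVec (fun j => M j i) (fun j => M j i))⁻¹ *ᵥ y))) := by
  classical
  set A : (Fin m → ℝ) → Matrix (Fin n) (Fin n) ℝ :=
    fun z => (1 : Matrix (Fin n) (Fin n) ℝ)
      + γ • ∑ i, z i • Matrix.vecMulVec (fun j => M j i) (fun j => M j i) with hAdef
  have hPD : ∀ z : Fin m → ℝ, (∀ i, 0 ≤ z i) → (A z).PosDef := by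
    intro z hz
    refine Matrix.PosDef.add_posSemidef Matrix.PosDef.one ?_
    refine aux_psd_smul ?_ hγ.le
    exact aux_psd_sum _ (fun i => aux_psd_smul (aux_psd_vvT _) (hz i))
  have hAff : ∀ (z w : Fin m → ℝ) (a b : ℝ), a + b = 1 →
      A (a • z + b • w) = a • A z + b • A w := by
    intro z w a b hab
    rw [hAdef]
    simp only []
    set P : Fin m → Matrix (Fin n) (Fin n) ℝ :=
      fun i => Matrix.vecMulVec (fun j => M j i) (fun j => M j i) with hP
    have hsum : ∑ i, ((a • z + b • w) i) • P i
        = a • ∑ i, z i • P i + b • ∑ i, w i • P i := by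
      rw [Finset.smul_sum, Finset.smul_sum, ← Finset.sum_add_distrib]
      refine Finset.sum_congr rfl fun i _ => ?_
      simp [add_smul, smul_smul]
    rw [hsum]
    have h1 : (1 : Matrix (Fin n) (Fin n) ℝ) = a • (1 : Matrix (Fin n) (Fin n) ℝ) + b • 1 := by
      rw [← add_smul, hab, one_smul]
    conv_lhs => rw [h1]
    module
  constructor
  · intro z hz w hw a b ha hb hab
    intro i
    have hzi := hz i
    have hwi := hw i
    constructor
    · have : 0 ≤ a * z i + b * w i :=
        add_nonneg (mul_nonneg ha hzi.1) (mul_nonneg hb hwi.1)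
      simpa using this
    · have : a * z i + b * w i ≤ a * 1 + b * 1 := by
        gcongr
        exacts [hzi.2, hwi.2]
      simpa [hab] using this
  · intro z hz w hw a b ha hb hab
    have hzPD := hPD z (fun i => (hz i).1)
    have hwPD := hPD w (fun i => (hw i).1)
    have hcz : ∀ i, 0 ≤ (a • z + b • w) i := by
      intro i
      have := add_nonneg (mul_nonneg ha (hz i).1) (mul_nonneg hb (hw i).1)
      simpa using this
    have hcPD := hPD _ hcz
    set x : Fin n → ℝ := (A (a • z + b • w))⁻¹ *ᵥ y with hxdef
    have hval : y ⬝ᵥ ((A (a • z + b • w))⁻¹ *ᵥ y)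
        = 2 * (y ⬝ᵥ x) - x ⬝ᵥ (A (a • z + b • w) *ᵥ x) := aux_val hcPD y
    have hsplit : x ⬝ᵥ (A (a • z + b • w) *ᵥ x)
        = a * (x ⬝ᵥ (A z *ᵥ x)) + b * (x ⬝ᵥ (A w *ᵥ x)) := by
      rw [hAff z w a b hab, Matrix.add_mulVec, dotProduct_add,
        Matrix.smul_mulVec, Matrix.smul_mulVec,
        dotProduct_smul, dotProduct_smul]
      simp
    have hkz : 2 * (y ⬝ᵥ x) - x ⬝ᵥ (A z *ᵥ x) ≤ y ⬝ᵥ ((A z)⁻¹ *ᵥ y) := aux_key hzPD y x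
    have hkw : 2 * (y ⬝ᵥ x) - x ⬝ᵥ (A w *ᵥ x) ≤ y ⬝ᵥ ((A w)⁻¹ *ᵥ y) := aux_key hwPD y x
    have hmz := mul_le_mul_of_nonneg_left hkz ha
    have hmw := mul_le_mul_of_nonneg_left hkw hb
    simp only [smul_eq_mul]
    have h2 : 2 * (y ⬝ᵥ x) = (a + b) * (2 * (y ⬝ᵥ x)) := by rw [hab]; ring
    nlinarith [hval, hsplit]
end

section
/- Let M ∈ ℝ^{n×m}, y ∈ ℝ^n, and γ > 0, and let w* = (γ⁻¹ I_m + Mᵀ M)⁻¹ Mᵀ y. Then (1/2)‖y − Mw*‖₂² + (1/(2γ))‖w*‖₂² = (1/2) yᵀ (I_n + γ M Mᵀ)⁻¹ y. -/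
open scoped Matrix
open Matrix

/-- Evaluation step in Proposition 1: at `w* = (γ⁻¹ I_m + Mᵀ M)⁻¹ Mᵀ y`, the ridge
objective equals `(1/2) yᵀ (I_n + γ M Mᵀ)⁻¹ y`. -/
theorem stmt5 (n m : ℕ) (M : Matrix (Fin n) (Fin m) ℝ) (y : Fin n → ℝ)
    (γ : ℝ) (hγ : 0 < γ) (wstar : Fin m → ℝ)
    (hw : wstar = (γ⁻¹ • (1 : Matrix (Fin m) (Fin m) ℝ) + Mᵀ * M)⁻¹ *ᵥ (Mᵀ *ᵥ y)) :
    (1/2) * (∑ j, (y j - (M *ᵥ wstar) j)^2) + (1/(2*γ)) * (∑ i, (wstar i)^2)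
      = (1/2) * (y ⬝ᵥ (((1 : Matrix (Fin n) (Fin n) ℝ) + γ • (M * Mᵀ))⁻¹ *ᵥ y)) := by
  set A : Matrix (Fin m) (Fin m) ℝ := γ⁻¹ • 1 + Mᵀ * M with hA
  set B : Matrix (Fin n) (Fin n) ℝ := 1 + γ • (M * Mᵀ) with hB
  have hMMt : (Mᵀ * M).PosSemidef := by
    have := posSemidef_conjTranspose_mul_self M
    simpa using this
  have hMM : (M * Mᵀ).PosSemidef := by
    have := posSemidef_self_mul_conjTranspose M
    simpa using this
  have hApd : A.PosDef := by
    apply PosDef.add_posSemidef _ hMMt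
    rw [smul_one_eq_diagonal]
    exact posDef_diagonal_iff.mpr (fun _ => by positivity)
  have hMMs : (γ • (M * Mᵀ)).PosSemidef := by
    refine ⟨?_, fun x => ?_⟩
    · show (γ • (M * Mᵀ))ᴴ = γ • (M * Mᵀ)
      rw [conjTranspose_smul, hMM.1.eq]
      simp
    · have := hMM.2 x
      exact (hMM.smul hγ.le).2 x
  have hBpd : B.PosDef := by
    refine PosDef.add_posSemidef ?_ hMMs
    have : (1 : Matrix (Fin n) (Fin n) ℝ) = diagonal (fun _ => 1) := by simp
    rw [this]
    exact posDef_diagonal_iff.mpr (fun _ => one_pos)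
  have hAdet : IsUnit A.det := (Matrix.isUnit_iff_isUnit_det _).mp hApd.isUnit
  have hBdet : IsUnit B.det := (Matrix.isUnit_iff_isUnit_det _).mp hBpd.isUnit
  have hAw : A *ᵥ wstar = Mᵀ *ᵥ y := by
    rw [hw, mulVec_mulVec, Matrix.mul_nonsing_inv _ hAdet, one_mulVec]
  have hAAinv : A * A⁻¹ = 1 := Matrix.mul_nonsing_inv _ hAdet
  have hkey : Mᵀ * (M * (A⁻¹ * Mᵀ)) = Mᵀ - γ⁻¹ • (A⁻¹ * Mᵀ) := by
    have h1 : Mᵀ * M = A - γ⁻¹ • 1 := by rw [hA, add_sub_cancel_left]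
    calc Mᵀ * (M * (A⁻¹ * Mᵀ)) = (Mᵀ * M) * (A⁻¹ * Mᵀ) := by rw [← Matrix.mul_assoc]
      _ = (A - γ⁻¹ • 1) * (A⁻¹ * Mᵀ) := by rw [h1]
      _ = A * A⁻¹ * Mᵀ - γ⁻¹ • (A⁻¹ * Mᵀ) := by
          rw [Matrix.sub_mul, Matrix.smul_mul, Matrix.one_mul, Matrix.mul_assoc]
      _ = Mᵀ - γ⁻¹ • (A⁻¹ * Mᵀ) := by rw [hAAinv, Matrix.one_mul]
  have hBinv : B⁻¹ = 1 - M * (A⁻¹ * Mᵀ) := by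
    refine Matrix.inv_eq_right_inv ?_
    have expand : B * (1 - M * (A⁻¹ * Mᵀ)) =
        1 - M * (A⁻¹ * Mᵀ) + γ • (M * Mᵀ) - γ • (M * (Mᵀ * (M * (A⁻¹ * Mᵀ)))) := by
      simp only [hB, Matrix.add_mul, Matrix.one_mul, Matrix.smul_mul, Matrix.mul_sub,
        Matrix.mul_one, Matrix.mul_assoc, smul_sub]
      abel
    rw [expand, hkey, Matrix.mul_sub, Matrix.mul_smul, smul_sub, smul_smul,
      mul_inv_cancel₀ hγ.ne', one_smul]
    abel
  have hs1 : ∑ j, (y j - (M *ᵥ wstar) j)^2 = (y - M *ᵥ wstar) ⬝ᵥ (y - M *ᵥ wstar) := by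
    simp [dotProduct, sq]
  have hs2 : ∑ i, (wstar i)^2 = wstar ⬝ᵥ wstar := by simp [dotProduct, sq]
  have hsym : wstar ⬝ᵥ (Mᵀ *ᵥ y) = y ⬝ᵥ (M *ᵥ wstar) := by
    rw [dotProduct_mulVec, vecMul_transpose, dotProduct_comm]
  have hquad : wstar ⬝ᵥ (A *ᵥ wstar)
      = wstar ⬝ᵥ ((Mᵀ * M) *ᵥ wstar) + γ⁻¹ * (wstar ⬝ᵥ wstar) := by
    rw [hA, add_mulVec, dotProduct_add, smul_mulVec, one_mulVec, dotProduct_smul,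
      smul_eq_mul, add_comm]
  have hMtM : wstar ⬝ᵥ ((Mᵀ * M) *ᵥ wstar) = (M *ᵥ wstar) ⬝ᵥ (M *ᵥ wstar) := by
    rw [← mulVec_mulVec, dotProduct_mulVec, vecMul_transpose]
  have hrhs : ((1 : Matrix (Fin n) (Fin n) ℝ) + γ • (M * Mᵀ))⁻¹ *ᵥ y = y - M *ᵥ wstar := by
    rw [← hB, hBinv, sub_mulVec, one_mulVec, hw, ← mulVec_mulVec, ← mulVec_mulVec]
  rw [hs1, hs2, hrhs]
  have e1 : wstar ⬝ᵥ (A *ᵥ wstar) = y ⬝ᵥ (M *ᵥ wstar) := by rw [hAw, hsym]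
  rw [hquad, hMtM] at e1
  have e2 : (1/(2*γ)) * (wstar ⬝ᵥ wstar)
      = (1/2) * (y ⬝ᵥ (M *ᵥ wstar) - (M *ᵥ wstar) ⬝ᵥ (M *ᵥ wstar)) := by
    have h := e1
    field_simp [hγ.ne'] at h ⊢
    linarith
  have h2 : (M *ᵥ wstar) ⬝ᵥ y = y ⬝ᵥ (M *ᵥ wstar) := dotProduct_comm _ _
  simp only [dotProduct_sub, sub_dotProduct]
  linarith [e2, h2]
end
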